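/- arXiv:1706.08868 — 5 statements merged into one kernel-verified Lean document; each statement's English description precedes it below -/
import Mathlib

section
/- For every positive integer n, √(2πn)·(n/e)^n·exp(1/(12n+1)) < Γ(n+1) < √(2πn)·(n/e)^n·exp(1/(12n)). -/
/-! Robbins' argument. The Stirling sequence `s n = n! / (√(2n) (n/e)^n)` tends to `√π`, and
`log s n - log s (n+1) = ∑_{k ≥ 1} r^k / (2k+1)` with `r = (2n+1)⁻²`. Bounding the coefficients
`1/(2k+1)` above by `1/3` and below by `3⁻ᵏ` (strictly for `k = 2`) sums to
`r/(3(1-r)) = 1/(12n) - 1/(12(n+1))` and `r/(3-r) > 1/(12n+1) - 1/(12(n+1)+1)`, so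
`log s n - 1/(12n)` increases strictly and `log s n - 1/(12n+1)` decreases strictly to `log √π`. -/

open Filter Real Topology
open scoped Nat

theorem lt_add_of_sub_succ_lt_sub_succ {a g : ℕ → ℝ} {L : ℝ} (ha : Tendsto a atTop (𝓝 L))
    (hg : Tendsto g atTop (𝓝 0)) (h : ∀ k, a k - a (k + 1) < g k - g (k + 1)) (n : ℕ) :
    a n < L + g n := by
  have hmono : StrictMono fun k => a k - g k := strictMono_nat_of_lt_succ fun k => by
    linarith [h k]
  have hlim : Tendsto (fun k => a k - g k) atTop (𝓝 L) := by simpa using ha.sub hg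
  linarith [(hmono n.lt_succ_self).trans_le (hmono.monotone.ge_of_tendsto hlim (n + 1))]

theorem add_lt_of_sub_succ_lt_sub_succ {a g : ℕ → ℝ} {L : ℝ} (ha : Tendsto a atTop (𝓝 L))
    (hg : Tendsto g atTop (𝓝 0)) (h : ∀ k, g k - g (k + 1) < a k - a (k + 1)) (n : ℕ) :
    L + g n < a n := by
  have := lt_add_of_sub_succ_lt_sub_succ (a := fun k => -a k) (g := fun k => -g k) ha.neg
    (by simpa using hg.neg) (fun k => by linarith [h k]) n
  linarith

theorem tendsto_one_div_mul_add_one_add_atTop_nhds_zero_nat {c : ℝ} (hc : 0 < c) (b : ℝ) :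
    Tendsto (fun k : ℕ => 1 / (c * (k + 1) + b)) atTop (𝓝 0) := by
  simp only [one_div]
  exact tendsto_inv_atTop_zero.comp <| tendsto_atTop_add_const_right _ b <|
    (tendsto_atTop_add_const_right _ 1 tendsto_natCast_atTop_atTop).const_mul_atTop hc

namespace Stirling

theorem log_stirlingSeq_sdiff_lt (n : ℕ) :
    log (stirlingSeq (n + 1)) - log (stirlingSeq (n + 2)) <
      1 / (12 * (n + 1)) - 1 / (12 * (n + 2)) := by
  have hs := log_stirlingSeq_sdiff_hasSum n
  set r : ℝ := (1 / (2 * ((n + 1 : ℕ) : ℝ) + 1)) ^ 2 with hr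
  have hr0 : 0 < r := by positivity
  have hr1 : r < 1 := by grw [hr, ← n.zero_le]; norm_num
  clear_value r
  have hgeom : HasSum (fun j : ℕ => r ^ (j + 1) / 3)
      (1 / (12 * (n + 1)) - 1 / (12 * (n + 2))) := by
    have hsum : (1 - r)⁻¹ * r / 3 = 1 / (12 * (n + 1)) - 1 / (12 * (n + 2)) := by
      rw [hr, div_pow, one_pow, one_sub_div (by positivity), inv_div,
        show (2 * ((n + 1 : ℕ) : ℝ) + 1) ^ 2 - 1 = 4 * (n + 1) * (n + 2) by push_cast; ring]
      field_simp
      ring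
    simpa only [← pow_succ, hsum] using
      ((hasSum_geometric_of_lt_one hr0.le hr1).mul_right r).div_const 3
  refine hasSum_lt (i := 1) (fun j => ?_) ?_ hs hgeom
  · rw [one_div_mul_eq_div]
    gcongr
    push_cast
    linarith [(j.cast_nonneg : (0 : ℝ) ≤ j)]
  · norm_num
    nlinarith [pow_pos hr0 2]

theorem log_stirlingSeq_sdiff_gt (n : ℕ) :
    1 / (12 * (n + 1) + 1) - 1 / (12 * (n + 2) + 1) <
      log (stirlingSeq (n + 1)) - log (stirlingSeq (n + 2)) := by
  have hs := log_stirlingSeq_sdiff_hasSum n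
  set r : ℝ := (1 / (2 * ((n + 1 : ℕ) : ℝ) + 1)) ^ 2 with hr
  have hr0 : 0 < r := by positivity
  have hr1 : r < 1 := by grw [hr, ← n.zero_le]; norm_num
  clear_value r
  have hgeom : HasSum (fun j : ℕ => (r / 3) ^ (j + 1)) (r / (3 - r)) := by
    have h3r : 3 - r ≠ 0 := by linarith
    have hsum : (1 - r / 3)⁻¹ * (r / 3) = r / (3 - r) := by field_simp
    simpa only [← pow_succ, hsum] using
      (hasSum_geometric_of_lt_one (by positivity) (by linarith : r / 3 < 1)).mul_right (r / 3)
  calc 1 / (12 * (n + 1) + 1) - 1 / (12 * (n + 2) + 1) < r / (3 - r) := by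
        have h3r : 0 < 3 - r := by linarith
        rw [hr] at h3r ⊢
        push_cast at h3r ⊢
        rw [div_sub_div _ _ (by positivity) (by positivity), div_lt_div_iff₀ (by positivity) h3r]
        field_simp
        ring_nf
        nlinarith [(n.cast_nonneg : (0 : ℝ) ≤ n)]
    _ < _ := by
      refine hasSum_lt (i := 1) (fun j => ?_) ?_ hgeom hs
      · rw [one_div_mul_eq_div, div_pow]
        gcongr
        have := one_add_mul_le_pow (by norm_num : (-2 : ℝ) ≤ 2) (j + 1)
        norm_num at this
        push_cast
        linarith
      · norm_num
        nlinarith [pow_pos hr0 2]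

theorem tendsto_log_stirlingSeq_succ :
    Tendsto (fun k : ℕ => log (stirlingSeq (k + 1))) atTop (𝓝 (log √π)) :=
  (tendsto_stirlingSeq_sqrt_pi.comp (tendsto_add_atTop_nat 1)).log (by positivity)

theorem stirlingSeq_lt_sqrt_pi_mul_exp {n : ℕ} (hn : n ≠ 0) :
    stirlingSeq n < √π * exp (1 / (12 * n)) := by
  obtain ⟨m, rfl⟩ := Nat.exists_eq_add_one_of_ne_zero hn
  have := lt_add_of_sub_succ_lt_sub_succ (g := fun k : ℕ => 1 / (12 * ((k : ℝ) + 1)))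
    tendsto_log_stirlingSeq_succ
    (by simpa using tendsto_one_div_mul_add_one_add_atTop_nhds_zero_nat (c := 12) (by norm_num) 0)
    (fun k => by convert log_stirlingSeq_sdiff_lt k using 3; push_cast; ring) m
  rw [← exp_lt_exp, exp_add, exp_log (stirlingSeq'_pos m), exp_log (by positivity)] at this
  exact_mod_cast this

theorem sqrt_pi_mul_exp_lt_stirlingSeq {n : ℕ} (hn : n ≠ 0) :
    √π * exp (1 / (12 * n + 1)) < stirlingSeq n := by
  obtain ⟨m, rfl⟩ := Nat.exists_eq_add_one_of_ne_zero hn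
  have := add_lt_of_sub_succ_lt_sub_succ (g := fun k : ℕ => 1 / (12 * ((k : ℝ) + 1) + 1))
    tendsto_log_stirlingSeq_succ
    (tendsto_one_div_mul_add_one_add_atTop_nhds_zero_nat (by norm_num) 1)
    (fun k => by convert log_stirlingSeq_sdiff_gt k using 3; push_cast; ring) m
  rw [← exp_lt_exp, exp_add, exp_log (stirlingSeq'_pos m), exp_log (by positivity)] at this
  exact_mod_cast this

theorem stirlingSeq_mul_eq_factorial {n : ℕ} (hn : n ≠ 0) :
    stirlingSeq n * (√(2 * n) * (n / exp 1) ^ n) = n ! := by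
  rw [stirlingSeq, div_mul_cancel₀]
  positivity

end Stirling

open Stirling in
theorem stirling_bounds (n : ℕ) (hn : 0 < n) :
    Real.sqrt (2 * Real.pi * n) * ((n : ℝ) / Real.exp 1) ^ n *
        Real.exp (1 / (12 * (n : ℝ) + 1)) < Real.Gamma ((n : ℝ) + 1) ∧
    Real.Gamma ((n : ℝ) + 1) <
      Real.sqrt (2 * Real.pi * n) * ((n : ℝ) / Real.exp 1) ^ n *
        Real.exp (1 / (12 * (n : ℝ))) := by
  have hD : 0 < √(2 * n) * (n / exp 1) ^ n := by positivity
  have hsplit (c : ℝ) :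
      √(2 * π * n) * (n / exp 1) ^ n * c = √π * c * (√(2 * n) * (n / exp 1) ^ n) := by
    rw [show 2 * π * n = π * (2 * n) by ring, sqrt_mul pi_pos.le]
    ring
  rw [Gamma_nat_eq_factorial, ← stirlingSeq_mul_eq_factorial hn.ne', hsplit, hsplit,
    mul_lt_mul_iff_of_pos_right hD, mul_lt_mul_iff_of_pos_right hD]
  exact ⟨sqrt_pi_mul_exp_lt_stirlingSeq hn.ne', stirlingSeq_lt_sqrt_pi_mul_exp hn.ne'⟩
end

section
/- Let φ(x) = Σ_{n=1}^∞ (-1)^{n+1} exp(-π n² x) for x > 0 and define ϕ(x) = φ(x/4) - φ(x). Then ϕ(x) > 0 for all x > 0. -/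
/-!
With `θ(x) = Σ_{n ∈ ℤ} e^{-π n² x}` one has `2φ(x) = 1 + θ(x) - 2θ(4x)`, hence
`2ϕ(x) = θ(x/4) - 3θ(x) + 2θ(4x)`, and Jacobi's transformation `θ(1/x) = √x θ(x)` turns this
into `ϕ(1/x) = √x ϕ(x)`. So it suffices to take `x ≥ 1`. There the alternating-series bounds
`e^{-πy} - e^{-4πy} ≤ φ(y) ≤ e^{-πy}` give `ϕ(x) ≥ e^{-πx/4} - 2e^{-πx} > 0`.
-/

/-- `phi x = Σ_{n=1}^∞ (-1)^{n+1} exp (-π n² x)`. -/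
noncomputable def phi (x : ℝ) : ℝ :=
  ∑' n : ℕ, (-1 : ℝ) ^ n * Real.exp (-Real.pi * ((n : ℝ) + 1) ^ 2 * x)

open Real Finset

noncomputable section

def theta (x : ℝ) : ℝ := ∑' n : ℤ, exp (-π * x * n ^ 2)

def psi (x : ℝ) : ℝ := ∑' n : ℕ, exp (-π * ((n : ℝ) + 1) ^ 2 * x)

def varphi (x : ℝ) : ℝ := phi (x / 4) - phi x

end

section

variable {x : ℝ}

lemma summable_psi_term (hx : 0 < x) :
    Summable fun n : ℕ => exp (-π * ((n : ℝ) + 1) ^ 2 * x) := by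
  have hq : exp (-π * x) < 1 := exp_lt_one_iff.mpr (by nlinarith [pi_pos])
  refine (summable_geometric_of_lt_one (exp_pos _).le hq).of_nonneg_of_le
    (fun n => (exp_pos _).le) fun n => ?_
  rw [← exp_nat_mul, exp_le_exp]
  have hn : (n : ℝ) ≤ ((n : ℝ) + 1) ^ 2 := by nlinarith
  nlinarith [mul_pos pi_pos hx]

lemma antitone_psi_term (hx : 0 < x) :
    Antitone fun n : ℕ => exp (-π * ((n : ℝ) + 1) ^ 2 * x) := by
  intro m n hmn
  have hsq : ((m : ℝ) + 1) ^ 2 ≤ ((n : ℝ) + 1) ^ 2 := by gcongr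
  exact exp_le_exp.mpr (by nlinarith [mul_pos pi_pos hx])

lemma theta_eq_one_add_two_mul_psi (hx : 0 < x) : theta x = 1 + 2 * psi x := by
  have hs := summable_psi_term hx
  have hterm (n : ℕ) : exp (-π * x * (((n : ℤ) + 1 : ℤ) : ℝ) ^ 2) =
      exp (-π * ((n : ℝ) + 1) ^ 2 * x) := by
    push_cast; ring_nf
  rw [theta, tsum_of_add_one_of_neg_add_one]
  · simp only [Int.cast_neg, neg_sq, hterm, Int.cast_zero, zero_pow two_ne_zero, mul_zero,
      exp_zero, psi]
    ring
  all_goals simpa only [Int.cast_neg, neg_sq, hterm] using hs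

lemma psi_sub_phi (hx : 0 < x) : psi x - phi x = 2 * psi (4 * x) := by
  have hs := summable_psi_term hx
  -- with the shifted index, `k ↦ 2k + 1` picks out the even `n = 2k + 2`
  have hodd : (fun k : ℕ => exp (-π * (((2 * k + 1 : ℕ) : ℝ) + 1) ^ 2 * x) -
      (-1) ^ (2 * k + 1) * exp (-π * (((2 * k + 1 : ℕ) : ℝ) + 1) ^ 2 * x)) =
      fun k : ℕ => 2 * exp (-π * ((k : ℝ) + 1) ^ 2 * (4 * x)) := by
    funext k
    rw [Odd.neg_one_pow ⟨k, rfl⟩]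
    push_cast
    ring_nf
  have hsum := HasSum.even_add_odd
    (f := fun n : ℕ => exp (-π * ((n : ℝ) + 1) ^ 2 * x) -
      (-1) ^ n * exp (-π * ((n : ℝ) + 1) ^ 2 * x))
    (by simpa only [pow_mul, neg_one_sq, one_pow, one_mul, sub_self] using hasSum_zero)
    (by rw [hodd]; exact (summable_psi_term (by positivity : 0 < 4 * x)).hasSum.mul_left 2)
  rw [psi, phi, ← hs.tsum_sub hs.alternating, hsum.tsum_eq, zero_add, psi]

lemma two_mul_phi (hx : 0 < x) : 2 * phi x = 1 + theta x - 2 * theta (4 * x) := by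
  rw [theta_eq_one_add_two_mul_psi hx, theta_eq_one_add_two_mul_psi (by positivity)]
  linarith [psi_sub_phi hx]

lemma two_mul_varphi (hx : 0 < x) :
    2 * varphi x = theta (x / 4) - 3 * theta x + 2 * theta (4 * x) := by
  have hquarter := two_mul_phi (by positivity : 0 < x / 4)
  rw [mul_div_cancel₀ x four_ne_zero] at hquarter
  rw [varphi]
  linarith [two_mul_phi hx]

lemma theta_inv (hx : 0 < x) : theta x⁻¹ = √x * theta x := by
  have h : theta x = (√x)⁻¹ * theta x⁻¹ := by
    simpa [theta, sqrt_eq_rpow, div_eq_mul_inv] using tsum_exp_neg_mul_int_sq hx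
  rw [h, mul_inv_cancel_left₀ (sqrt_pos.mpr hx).ne']

lemma varphi_inv (hx : 0 < x) : varphi x⁻¹ = √x * varphi x := by
  have hsqrt4 : √4 = 2 := by
    rw [show (4 : ℝ) = 2 ^ 2 by norm_num, sqrt_sq zero_le_two]
  have hsmall : theta (x⁻¹ / 4) = 2 * √x * theta (4 * x) := by
    rw [show x⁻¹ / 4 = (4 * x)⁻¹ by ring, theta_inv (by positivity), sqrt_mul zero_le_four,
      hsqrt4]
  have hlarge : theta (4 * x⁻¹) = √x / 2 * theta (x / 4) := by
    rw [show 4 * x⁻¹ = (x / 4)⁻¹ by rw [inv_div]; ring, theta_inv (by positivity),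
      sqrt_div hx.le, hsqrt4]
  have h := two_mul_varphi (inv_pos.mpr hx)
  rw [hsmall, hlarge, theta_inv hx] at h
  linear_combination h / 2 - √x * two_mul_varphi hx / 2

lemma phi_le_exp (hx : 0 < x) : phi x ≤ exp (-π * x) := by
  simpa [phi] using (antitone_psi_term hx).tendsto_le_alternating_series
    (summable_psi_term hx).tendsto_alternating_series_tsum 0

lemma exp_sub_exp_le_phi (hx : 0 < x) : exp (-π * x) - exp (-π * (4 * x)) ≤ phi x :=
  calc exp (-π * x) - exp (-π * (4 * x))
      = ∑ i ∈ range (2 * 1), (-1) ^ i * exp (-π * ((i : ℝ) + 1) ^ 2 * x) := by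
        norm_num [sum_range_succ]
        ring_nf
    _ ≤ phi x := (antitone_psi_term hx).alternating_series_le_tendsto
        (summable_psi_term hx).tendsto_alternating_series_tsum 1

lemma varphi_pos_of_one_le (hx : 1 ≤ x) : 0 < varphi x := by
  have hx0 : 0 < x := by linarith
  have hquarter := exp_sub_exp_le_phi (by positivity : 0 < x / 4)
  rw [mul_div_cancel₀ x four_ne_zero] at hquarter
  have hgap : 2 < exp (3 * π * x / 4) := by
    nlinarith [add_one_le_exp (3 * π * x / 4), pi_gt_three]
  have hexp : exp (-π * (x / 4)) = exp (-π * x) * exp (3 * π * x / 4) := by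
    rw [← exp_add]; ring_nf
  rw [varphi]
  nlinarith [phi_le_exp hx0, exp_pos (-π * x)]

end

theorem varphi_pos (x : ℝ) (hx : 0 < x) : 0 < phi (x / 4) - phi x := by
  rcases le_or_gt 1 x with hge | hlt
  · exact varphi_pos_of_one_le hge
  · have hinv := varphi_inv (inv_pos.mpr hx)
    rw [inv_inv] at hinv
    change 0 < varphi x
    rw [hinv]
    exact mul_pos (sqrt_pos.mpr (inv_pos.mpr hx))
      (varphi_pos_of_one_le ((one_le_inv₀ hx).mpr hlt.le))
end

section
/- Let m be a positive integer and y a real number with 0 < 2y < m. Then the Kummer confluent hypergeometric function satisfies |₁F₁(1; m+2; y) - (1 - y/m)^{-1}| ≤ M/m with the explicit constant M = 6 + 432/(e·log 2)³. -/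
/-- The Kummer function `₁F₁(1; m+2; y) = Σ_{k≥0} y^k / ((m+2)(m+3)⋯(m+k+1))`. -/
noncomputable def kummer1F1 (m : ℕ) (y : ℝ) : ℝ :=
  ∑' k : ℕ, y ^ k / ∏ i ∈ Finset.range k, ((m : ℝ) + 2 + (i : ℝ))

/-! With `r = y / m`, the `k`-th term of the series is `r ^ k` times `∏_{i<k} m / (m + 2 + i)`,
a product of factors in `[0, 1]` each at distance at most `(k + 1) / m` from `1`. So the series
differs termwise from the geometric series `∑ r ^ k = (1 - r)⁻¹` by at most
`r ^ k k (k + 1) / m ≤ 4 (3/4) ^ k / m` (as `r ≤ 1/2`). Summing gives the bound `16 / m`, and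
`16 ≤ 6 + 432 / (e log 2) ^ 3` because `e log 2 < 3`. -/

open Finset

theorem one_sub_prod_le_sum_one_sub {f : ℕ → ℝ} (h0 : ∀ i, 0 ≤ f i) (h1 : ∀ i, f i ≤ 1)
    (k : ℕ) : 1 - ∏ i ∈ range k, f i ≤ ∑ i ∈ range k, (1 - f i) := by
  induction k with
  | zero => simp
  | succ k ih =>
    rw [prod_range_succ, sum_range_succ]
    have hp0 : 0 ≤ ∏ i ∈ range k, f i := prod_nonneg fun i _ => h0 i
    have hp1 : ∏ i ∈ range k, f i ≤ 1 := prod_le_one (fun i _ => h0 i) (fun i _ => h1 i)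
    nlinarith [h0 k, h1 k]

theorem natCast_mul_succ_le_four_mul_pow (k : ℕ) :
    (k : ℝ) * (k + 1) ≤ 4 * (3 / 2 : ℝ) ^ k := by
  induction k with
  | zero => norm_num
  | succ k ih =>
    push_cast
    rw [pow_succ]
    rcases lt_or_ge k 4 with h | h
    · interval_cases k <;> norm_num
    · have hk : (4 : ℝ) ≤ k := by exact_mod_cast h
      nlinarith [pow_pos (by norm_num : (0 : ℝ) < 3 / 2) k]

theorem abs_tsum_sub_tsum_le {ι : Type*} {a g b : ι → ℝ} {s : ℝ} (hg : Summable g)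
    (hb : HasSum b s) (h : ∀ i, |a i - g i| ≤ b i) : |∑' i, a i - ∑' i, g i| ≤ s := by
  have h' : ∀ i, ‖a i - g i‖ ≤ b i := fun i => (Real.norm_eq_abs _).trans_le (h i)
  have ha : Summable a := by simpa using (Summable.of_norm_bounded hb.summable h').add hg
  rw [← ha.tsum_sub hg]
  exact tsum_of_norm_bounded hb h'

section KummerTerm

variable (m k : ℕ)

theorem div_add_two_add_mem_Icc (i : ℕ) : (m : ℝ) / (m + 2 + i) ∈ Set.Icc 0 1 :=
  ⟨by positivity,
    div_le_one_of_le₀ (by linarith [(i.cast_nonneg : (0 : ℝ) ≤ i)]) (by positivity)⟩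

theorem one_sub_prod_div_add_two_add_le (hm : 0 < m) :
    1 - ∏ i ∈ range k, (m : ℝ) / (m + 2 + i) ≤ k * (k + 1) / m := by
  have hm' : (0 : ℝ) < m := by exact_mod_cast hm
  have hfactor : ∀ i ∈ range k, 1 - (m : ℝ) / (m + 2 + i) ≤ (k + 1) / m := by
    intro i hi
    have hik : (i : ℝ) + 1 ≤ k := by exact_mod_cast mem_range.mp hi
    rw [one_sub_div (by positivity), div_le_div_iff₀ (by positivity) hm']
    nlinarith [(i.cast_nonneg : (0 : ℝ) ≤ i)]
  calc 1 - ∏ i ∈ range k, (m : ℝ) / (m + 2 + i)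
      ≤ ∑ i ∈ range k, (1 - (m : ℝ) / (m + 2 + i)) :=
        one_sub_prod_le_sum_one_sub (fun i => (div_add_two_add_mem_Icc m i).1)
          (fun i => (div_add_two_add_mem_Icc m i).2) k
    _ ≤ ∑ _i ∈ range k, ((k : ℝ) + 1) / m := sum_le_sum hfactor
    _ = k * (k + 1) / m := by rw [sum_const, card_range, nsmul_eq_mul]; ring

theorem pow_div_prod_add_two_add (y : ℝ) (hm : (m : ℝ) ≠ 0) :
    y ^ k / ∏ i ∈ range k, ((m : ℝ) + 2 + i) =
      (y / m) ^ k * ∏ i ∈ range k, (m : ℝ) / (m + 2 + i) := by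
  rw [div_pow, prod_div_distrib, prod_const, card_range, div_mul_div_comm,
    mul_comm ((m : ℝ) ^ k), mul_div_mul_right _ _ (pow_ne_zero k hm)]

theorem abs_pow_div_prod_add_two_add_sub_pow_le {y : ℝ} (hy : 0 ≤ y) (hm : 2 * y < m) :
    |y ^ k / ∏ i ∈ range k, ((m : ℝ) + 2 + i) - (y / m) ^ k| ≤ 4 * (3 / 4 : ℝ) ^ k / m := by
  have hm0 : (0 : ℝ) < m := by linarith
  set p := ∏ i ∈ range k, (m : ℝ) / (m + 2 + i)
  have hp1 : p ≤ 1 := prod_le_one (fun i _ => (div_add_two_add_mem_Icc m i).1)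
    (fun i _ => (div_add_two_add_mem_Icc m i).2)
  have hr : (y / m) ^ k ≤ (1 / 2) ^ k :=
    pow_le_pow_left₀ (by positivity) (by rw [div_le_iff₀ hm0]; linarith) k
  rw [pow_div_prod_add_two_add m k y hm0.ne', ← mul_sub_one, abs_mul,
    abs_of_nonneg (by positivity), abs_sub_comm, abs_of_nonneg (by linarith)]
  calc (y / m) ^ k * (1 - p) ≤ (1 / 2) ^ k * (k * (k + 1) / m) :=
        mul_le_mul hr (one_sub_prod_div_add_two_add_le m k (by exact_mod_cast hm0)) (by linarith)
          (by positivity)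
    _ ≤ (1 / 2) ^ k * (4 * (3 / 2) ^ k / m) := by
        gcongr (1 / 2) ^ k * (?_ / _); exact natCast_mul_succ_le_four_mul_pow k
    _ = 4 * (3 / 4 : ℝ) ^ k / m := by
        rw [show (3 / 4 : ℝ) = 1 / 2 * (3 / 2) by norm_num, mul_pow]; ring

end KummerTerm

theorem abs_kummer1F1_sub_inv_one_sub_le {m : ℕ} {y : ℝ} (hy : 0 ≤ y) (hm : 2 * y < m) :
    |kummer1F1 m y - (1 - y / m)⁻¹| ≤ 16 / m := by
  have hm0 : (0 : ℝ) < m := by linarith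
  have hr0 : 0 ≤ y / m := by positivity
  have hr1 : y / m < 1 := by rw [div_lt_iff₀ hm0]; linarith
  have hbound : HasSum (fun k : ℕ => 4 * (3 / 4 : ℝ) ^ k / m) (16 / m) := by
    have h := ((hasSum_geometric_of_lt_one (r := (3 / 4 : ℝ)) (by norm_num)
      (by norm_num)).mul_left 4).div_const (m : ℝ)
    rwa [show (4 : ℝ) * (1 - 3 / 4)⁻¹ = 16 by norm_num] at h
  rw [kummer1F1, ← tsum_geometric_of_lt_one hr0 hr1]
  exact abs_tsum_sub_tsum_le (summable_geometric_of_lt_one hr0 hr1) hbound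
    fun k => abs_pow_div_prod_add_two_add_sub_pow_le m k hy hm

theorem sixteen_le_six_add_div_exp_one_mul_log_two_pow_three :
    (16 : ℝ) ≤ 6 + 432 / (Real.exp 1 * Real.log 2) ^ 3 := by
  have he : Real.exp 1 < 3 := by linarith [Real.exp_one_lt_d9]
  have hl : Real.log 2 < 1 := by linarith [Real.log_two_lt_d9]
  have hpos : 0 < Real.exp 1 * Real.log 2 := mul_pos (Real.exp_pos 1) (Real.log_pos one_lt_two)
  have hcube : (Real.exp 1 * Real.log 2) ^ 3 ≤ 27 := by
    have : Real.exp 1 * Real.log 2 ≤ 3 := by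
      nlinarith [mul_pos (sub_pos.mpr he) (Real.log_pos one_lt_two)]
    calc (Real.exp 1 * Real.log 2) ^ 3 ≤ 3 ^ 3 := by gcongr
      _ = 27 := by norm_num
  rw [← sub_le_iff_le_add', le_div_iff₀ (by positivity)]
  nlinarith

theorem kummer1F1_approx (m : ℕ) (y : ℝ) (hy : 0 < y) (hm : 2 * y < m) :
    |kummer1F1 m y - (1 - y / m)⁻¹| ≤
      (6 + 432 / (Real.exp 1 * Real.log 2) ^ 3) / m := by
  calc |kummer1F1 m y - (1 - y / m)⁻¹| ≤ 16 / m := abs_kummer1F1_sub_inv_one_sub_le hy.le hm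
    _ ≤ (6 + 432 / (Real.exp 1 * Real.log 2) ^ 3) / m := by
        gcongr; exact sixteen_le_six_add_div_exp_one_mul_log_two_pow_three
end

section
/- Let 0 < q < 1, x ∈ ℝ, and m, y with 0 < 2y < m. Write F = ₂F₂(1, m+2+q+ix; m+2, m+3+q+ix; y). Then ((m+2+q)² + x²)·|Re F - ₁F₁(1; m+2; y)| ≤ 5y and ((m+2+q)² + x²)·|Im F| ≤ 5|x|. -/
/-!
Write `a = m + 2 + q + x i` and `t k = y ^ k / ((m + 2) ⋯ (m + k + 1))`. Since
`a / (a + k) = 1 - k / (a + k)`, the `k`-th term of `₂F₂ - ₁F₁` is `t k` times a number with real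
part `-k (Re a + k) / |a + k|²` and imaginary part `k Im a / |a + k|²`; as `|a| ≤ |a + k|`, the
weight `|a|²` cancels the denominator. What is left is dominated by `Σ k rᵏ = r / (1 - r)²` with
`r = y / (m + 2) ≤ 1 / 2`, using `t k (m + 3 + k) ≤ (m + 4) rᵏ` for the real part.
-/

open Complex

/-- `₂F₂(1, a; m+2, a+1; y)` with `a = m+2+q+ix`, written as
`Σ_{k≥0} [y^k/((m+2)⋯(m+k+1))] ⬝ a/(a+k)`. -/
noncomputable def kummer2F2 (m : ℕ) (q x y : ℝ) : ℂ :=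
  ∑' k : ℕ, ((y ^ k / ∏ i ∈ Finset.range k, ((m : ℝ) + 2 + (i : ℝ)) : ℝ) : ℂ) *
    (((m : ℂ) + 2 + (q : ℂ) + (x : ℂ) * Complex.I) /
      ((m : ℂ) + 2 + (q : ℂ) + (x : ℂ) * Complex.I + (k : ℂ)))

namespace Complex

variable {a : ℂ} {k : ℝ}

lemma normSq_le_normSq_add_ofReal (ha : 0 ≤ a.re) (hk : 0 ≤ k) :
    normSq a ≤ normSq (a + k) := by
  simp only [normSq_apply, add_re, ofReal_re, add_im, ofReal_im, add_zero]
  nlinarith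

lemma norm_div_add_ofReal_le_one (ha : 0 ≤ a.re) (hk : 0 ≤ k) : ‖a / (a + k)‖ ≤ 1 := by
  rw [norm_div]
  refine div_le_one_of_le₀ ?_ (norm_nonneg _)
  rw [← sq_le_sq₀ (norm_nonneg _) (norm_nonneg _), ← normSq_eq_norm_sq, ← normSq_eq_norm_sq]
  exact normSq_le_normSq_add_ofReal ha hk

lemma re_div_add_ofReal_sub_one (h : a + k ≠ 0) :
    (a / (a + k)).re - 1 = -(k * (a.re + k)) / normSq (a + k) := by
  have hN : normSq (a + k) ≠ 0 := (normSq_pos.mpr h).ne'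
  rw [div_re, ← add_div, div_sub_one hN, normSq_apply]
  simp only [add_re, ofReal_re, add_im, ofReal_im, add_zero]
  ring

lemma im_div_add_ofReal : (a / (a + k)).im = k * a.im / normSq (a + k) := by
  rw [div_im]
  simp only [add_re, ofReal_re, add_im, ofReal_im, add_zero]
  ring

lemma normSq_mul_abs_re_div_add_ofReal_sub_one_le (ha : 0 < a.re) (hk : 0 ≤ k) :
    normSq a * |(a / (a + k)).re - 1| ≤ k * (a.re + k) := by
  have hpos : 0 < normSq (a + k) := normSq_pos.mpr fun h => by
    have := congrArg re h
    simp only [add_re, ofReal_re, zero_re] at this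
    linarith
  rw [re_div_add_ofReal_sub_one (normSq_pos.mp hpos), abs_div, abs_neg,
    abs_of_nonneg (by positivity), abs_of_pos hpos, mul_div_left_comm]
  exact mul_le_of_le_one_right (by positivity)
    ((div_le_one hpos).mpr (normSq_le_normSq_add_ofReal ha.le hk))

lemma normSq_mul_abs_im_div_add_ofReal_le (ha : 0 ≤ a.re) (hk : 0 ≤ k) :
    normSq a * |(a / (a + k)).im| ≤ k * |a.im| := by
  rw [im_div_add_ofReal, abs_div, abs_mul, abs_of_nonneg hk, abs_of_nonneg (normSq_nonneg _),
    mul_div_left_comm]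
  exact mul_le_of_le_one_right (by positivity)
    (div_le_one_of_le₀ (normSq_le_normSq_add_ofReal ha hk) (normSq_nonneg _))

end Complex

section TermwiseComparison

variable {t : ℕ → ℝ} {a : ℂ}

lemma summable_ofReal_mul_div_add_natCast (ha : 0 ≤ a.re) (ht : Summable t) :
    Summable fun k : ℕ => (t k : ℂ) * (a / (a + k)) := by
  refine ht.norm.of_norm_bounded fun k => ?_
  rw [norm_mul, norm_real]
  refine mul_le_of_le_one_right (norm_nonneg _) ?_
  simpa using norm_div_add_ofReal_le_one ha k.cast_nonneg

lemma normSq_mul_abs_re_tsum_sub_tsum_le (ha : 0 < a.re) (ht0 : ∀ k, 0 ≤ t k)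
    (ht : Summable t) {b : ℕ → ℝ} {B : ℝ} (hb : HasSum b B)
    (htb : ∀ k : ℕ, t k * (k * (a.re + k)) ≤ b k) :
    normSq a * |(∑' k : ℕ, (t k : ℂ) * (a / (a + k))).re - ∑' k, t k| ≤ B := by
  have hS := (summable_ofReal_mul_div_add_natCast ha.le ht).hasSum
  have hdiff : HasSum (fun k : ℕ => normSq a * (t k * ((a / (a + k)).re - 1)))
      (normSq a * ((∑' k : ℕ, (t k : ℂ) * (a / (a + k))).re - ∑' k, t k)) := by
    simpa only [re_ofReal_mul, mul_sub, mul_one] using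
      ((hasSum_re hS).sub ht.hasSum).mul_left (normSq a)
  rw [← abs_of_nonneg (normSq_nonneg a), ← abs_mul]
  refine hdiff.norm_le_of_bounded hb fun k => ?_
  rw [Real.norm_eq_abs, abs_mul, abs_mul, abs_of_nonneg (normSq_nonneg a),
    abs_of_nonneg (ht0 k), mul_left_comm]
  calc t k * (normSq a * |(a / (a + k)).re - 1|)
      ≤ t k * (k * (a.re + k)) := by
        refine mul_le_mul_of_nonneg_left ?_ (ht0 k)
        simpa using normSq_mul_abs_re_div_add_ofReal_sub_one_le ha k.cast_nonneg
    _ ≤ b k := htb k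

lemma normSq_mul_abs_im_tsum_le (ha : 0 ≤ a.re) (ht0 : ∀ k, 0 ≤ t k)
    (ht : Summable t) {b : ℕ → ℝ} {B : ℝ} (hb : HasSum b B) (htb : ∀ k : ℕ, t k * k ≤ b k) :
    normSq a * |(∑' k : ℕ, (t k : ℂ) * (a / (a + k))).im| ≤ |a.im| * B := by
  have hS := (summable_ofReal_mul_div_add_natCast ha ht).hasSum
  have him : HasSum (fun k : ℕ => normSq a * (t k * (a / (a + k)).im))
      (normSq a * (∑' k : ℕ, (t k : ℂ) * (a / (a + k))).im) := by
    simpa only [im_ofReal_mul] using (hasSum_im hS).mul_left (normSq a)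
  rw [← abs_of_nonneg (normSq_nonneg a), ← abs_mul]
  refine him.norm_le_of_bounded (hb.mul_left |a.im|) fun k => ?_
  rw [Real.norm_eq_abs, abs_mul, abs_mul, abs_of_nonneg (normSq_nonneg a),
    abs_of_nonneg (ht0 k), mul_left_comm]
  calc t k * (normSq a * |(a / (a + k)).im|)
      ≤ t k * (k * |a.im|) := by
        refine mul_le_mul_of_nonneg_left ?_ (ht0 k)
        simpa using normSq_mul_abs_im_div_add_ofReal_le ha k.cast_nonneg
    _ = |a.im| * (t k * k) := by ring
    _ ≤ |a.im| * b k := by gcongr; exact htb k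

end TermwiseComparison

noncomputable def kummerTerm (m : ℕ) (y : ℝ) (k : ℕ) : ℝ :=
  y ^ k / ∏ i ∈ Finset.range k, ((m : ℝ) + 2 + (i : ℝ))

section KummerTerm

variable {m : ℕ} {y : ℝ}

lemma kummerTerm_succ (k : ℕ) :
    kummerTerm m y (k + 1) = kummerTerm m y k * (y / (m + 2 + k)) := by
  rw [kummerTerm, kummerTerm, Finset.prod_range_succ, pow_succ, div_mul_div_comm]

lemma kummerTerm_nonneg (hy : 0 ≤ y) (k : ℕ) : 0 ≤ kummerTerm m y k := by
  unfold kummerTerm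
  positivity

lemma kummerTerm_le_pow (hy : 0 ≤ y) (k : ℕ) : kummerTerm m y k ≤ (y / (m + 2)) ^ k := by
  induction k with
  | zero => simp [kummerTerm]
  | succ k ih =>
    rw [kummerTerm_succ, pow_succ]
    refine mul_le_mul ih (div_le_div_of_nonneg_left hy (by positivity) ?_) (by positivity)
      (by positivity)
    simp

lemma summable_kummerTerm (hy : 0 ≤ y) (hym : y < m + 2) : Summable (kummerTerm m y) :=
  (summable_geometric_of_lt_one (by positivity) ((div_lt_one (by positivity)).mpr hym)
    ).of_nonneg_of_le (kummerTerm_nonneg hy) (kummerTerm_le_pow hy)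

lemma kummerTerm_mul_le (hy : 0 ≤ y) (k : ℕ) :
    kummerTerm m y k * (m + 3 + k) ≤ (m + 4) * (y / (m + 2)) ^ k := by
  cases k with
  | zero => simp [kummerTerm]; norm_num
  | succ k =>
    have hratio : ((m : ℝ) + 4 + k) / (m + 2 + k) ≤ (m + 4) / (m + 2) := by
      rw [div_le_div_iff₀ (by positivity) (by positivity)]
      nlinarith [k.cast_nonneg (α := ℝ)]
    calc kummerTerm m y (k + 1) * (m + 3 + (k + 1 : ℕ))
        = kummerTerm m y k * y * ((m + 4 + k) / (m + 2 + k)) := by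
          rw [kummerTerm_succ]; push_cast; ring
      _ ≤ (y / (m + 2)) ^ k * y * ((m + 4) / (m + 2)) := by
          gcongr
          exact kummerTerm_le_pow hy k
      _ = (m + 4) * (y / (m + 2)) ^ (k + 1) := by ring

lemma kummerTerm_mul_natCast_mul_le (hy : 0 ≤ y) {q : ℝ} (hq : q ≤ 1) (k : ℕ) :
    kummerTerm m y k * (k * (m + 2 + q + k)) ≤ (m + 4) * (k * (y / (m + 2)) ^ k) :=
  calc kummerTerm m y k * (k * (m + 2 + q + k)) ≤ k * (kummerTerm m y k * (m + 3 + k)) := by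
        rw [mul_left_comm]
        exact mul_le_mul_of_nonneg_left
          (mul_le_mul_of_nonneg_left (by linarith) (kummerTerm_nonneg hy k)) k.cast_nonneg
    _ ≤ k * ((m + 4) * (y / (m + 2)) ^ k) :=
        mul_le_mul_of_nonneg_left (kummerTerm_mul_le hy k) k.cast_nonneg
    _ = (m + 4) * (k * (y / (m + 2)) ^ k) := by ring

end KummerTerm

lemma div_one_sub_sq_le_two {r : ℝ} (hr : r ≤ 1 / 2) : r / (1 - r) ^ 2 ≤ 2 := by
  rw [div_le_iff₀ (by nlinarith)]
  nlinarith

lemma add_four_mul_div_one_sub_sq_le {m y : ℝ} (hy : 0 ≤ y) (hm : 2 * y < m) :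
    (m + 4) * (y / (m + 2) / (1 - y / (m + 2)) ^ 2) ≤ 4 * y := by
  have hmy : 0 < m + 2 - y := by linarith
  have hm2 : m + 2 ≠ 0 := by linarith
  have h : y / (m + 2) / (1 - y / (m + 2)) ^ 2 = y * (m + 2) / (m + 2 - y) ^ 2 := by
    field_simp
  rw [h, mul_div_assoc', div_le_iff₀ (by positivity)]
  have hu : m + 4 ≤ 2 * (m + 2 - y) := by linarith
  nlinarith [mul_le_mul hu hu (by linarith) (by linarith)]

theorem kummer2F2_approx (m : ℕ) (q x y : ℝ) (hq0 : 0 < q) (hq1 : q < 1)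
    (hy : 0 < y) (hm : 2 * y < m) :
    (((m : ℝ) + 2 + q) ^ 2 + x ^ 2) * |(kummer2F2 m q x y).re - kummer1F1 m y| ≤ 5 * y ∧
    (((m : ℝ) + 2 + q) ^ 2 + x ^ 2) * |(kummer2F2 m q x y).im| ≤ 5 * |x| := by
  set r : ℝ := y / (m + 2)
  have hr0 : 0 ≤ r := by positivity
  have hr_half : r ≤ 1 / 2 := by
    rw [div_le_iff₀ (by positivity)]
    linarith
  have hgeom : HasSum (fun k : ℕ => (k : ℝ) * r ^ k) (r / (1 - r) ^ 2) :=
    hasSum_coe_mul_geometric_of_norm_lt_one (by rw [Real.norm_of_nonneg hr0]; linarith)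
  have ht := summable_kummerTerm (m := m) hy.le (by linarith)
  set a : ℂ := m + 2 + q + x * I
  have ha_re : a.re = m + 2 + q := by simp [a]
  have ha_im : a.im = x := by simp [a]
  have hnormSq : normSq a = ((m : ℝ) + 2 + q) ^ 2 + x ^ 2 := by
    rw [normSq_apply, ha_re, ha_im]; ring
  have hF : kummer2F2 m q x y = ∑' k : ℕ, (kummerTerm m y k : ℂ) * (a / (a + k)) := rfl
  have hK : kummer1F1 m y = ∑' k, kummerTerm m y k := rfl
  rw [← hnormSq, hF, hK]
  constructor
  · refine (normSq_mul_abs_re_tsum_sub_tsum_le (by rw [ha_re]; positivity)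
      (kummerTerm_nonneg hy.le) ht (hgeom.mul_left ((m : ℝ) + 4)) fun k => ?_).trans ?_
    · rw [ha_re]
      exact kummerTerm_mul_natCast_mul_le hy.le hq1.le k
    · linarith [add_four_mul_div_one_sub_sq_le (m := m) hy.le hm]
  · refine (normSq_mul_abs_im_tsum_le (by rw [ha_re]; positivity)
      (kummerTerm_nonneg hy.le) ht hgeom fun k => ?_).trans ?_
    · rw [mul_comm]
      gcongr
      exact kummerTerm_le_pow hy.le k
    · rw [ha_im]
      nlinarith [div_one_sub_sq_le_two hr_half, abs_nonneg x]
end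

section
/- Let (k-1/2)π < x_k < kπ for each k ∈ ℕ, let g(z) = Π_{k=1}^∞ (1 - z²/x_k²) and g_p(z) = Π_{k=1}^{2p} (1 - z²/x_k²). Then for every r > 0 and every z with |z| < πr, |g_p(z) - g(z)| ≤ r²·cosh(πr)/p · C for some absolute constant C (in particular g_p → g uniformly on the closed disk of radius πr as p → ∞). -/
open Complex

/-!
Write the factors as `1 + w k` with `w k = -z² / x_{k+1}²`, so that `‖w k‖ ≤ r² / (k + 1/2)²`.
For `n ≤ N` one has the telescoping bound
`‖∏_{k<N} (1 + w k) - ∏_{k<n} (1 + w k)‖ ≤ ∏_{k<N} (1 + ‖w k‖) · ∑_{n≤k<N} ‖w k‖`,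
which passes to the limit `N → ∞`. The product is at most `∏ (1 + r² / (k + 1/2)²) = cosh (π r)`,
which follows from Euler's product for `sin` at `i r` and `sinh (2 π r) = 2 sinh (π r) cosh (π r)`;
the tail sum from `k = 2p` is at most `r² ∑_{k ≥ 2p} 1 / k² ≤ r² / p`.
-/

open Finset Filter Topology
open scoped Real

section InfiniteProduct

variable {R : Type*} [NormedCommRing R] [NormOneClass R]

theorem norm_prod_one_add_le {ι : Type*} (s : Finset ι) (w : ι → R) :
    ‖∏ k ∈ s, (1 + w k)‖ ≤ ∏ k ∈ s, (1 + ‖w k‖) :=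
  (Finset.norm_prod_le _ _).trans <| prod_le_prod (fun _ _ => norm_nonneg _) fun k _ =>
    (norm_add_le _ _).trans_eq (by rw [norm_one])

theorem norm_prod_range_one_add_sub_le (w : ℕ → R) {n N : ℕ} (hnN : n ≤ N) :
    ‖∏ k ∈ range N, (1 + w k) - ∏ k ∈ range n, (1 + w k)‖ ≤
      (∏ k ∈ range N, (1 + ‖w k‖)) * ∑ k ∈ Ico n N, ‖w k‖ := by
  induction N, hnN using Nat.le_induction with
  | base => simp
  | succ N hnN ih =>
    set P := ∏ k ∈ range N, (1 + ‖w k‖)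
    have hP : 0 ≤ P := prod_nonneg fun _ _ => by positivity
    calc ‖∏ k ∈ range (N + 1), (1 + w k) - ∏ k ∈ range n, (1 + w k)‖
        = ‖(∏ k ∈ range N, (1 + w k) - ∏ k ∈ range n, (1 + w k)) +
            (∏ k ∈ range N, (1 + w k)) * w N‖ := by
          rw [prod_range_succ]; ring_nf
      _ ≤ P * ∑ k ∈ Ico n N, ‖w k‖ + P * ‖w N‖ := by
          grw [norm_add_le, ih, norm_mul_le, norm_prod_one_add_le]
      _ ≤ (P * (1 + ‖w N‖)) * (∑ k ∈ Ico n N, ‖w k‖ + ‖w N‖) := by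
          have : 0 ≤ ∑ k ∈ Ico n N, ‖w k‖ := sum_nonneg fun _ _ => norm_nonneg _
          nlinarith [norm_nonneg (w N), mul_nonneg hP (norm_nonneg (w N))]
      _ = _ := by rw [prod_range_succ, sum_Ico_succ_top hnN]

theorem norm_tprod_one_add_sub_prod_range_le [CompleteSpace R] {w : ℕ → R} {c : ℕ → ℝ}
    (hwc : ∀ k, ‖w k‖ ≤ c k) (hc : Summable c) {B T : ℝ}
    (hB : ∀ N, ∏ k ∈ range N, (1 + c k) ≤ B) (n : ℕ) (hT : ∀ N, ∑ k ∈ Ico n N, c k ≤ T) :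
    ‖∏' k, (1 + w k) - ∏ k ∈ range n, (1 + w k)‖ ≤ B * T := by
  have hw : Multipliable fun k => 1 + w k :=
    multipliable_one_add_of_summable (hc.of_nonneg_of_le (fun _ => norm_nonneg _) hwc)
  refine le_of_tendsto (hw.hasProd.tendsto_prod_nat.sub_const _).norm ?_
  filter_upwards [eventually_ge_atTop n] with N hN
  refine (norm_prod_range_one_add_sub_le w hN).trans (mul_le_mul ?_ ?_ ?_ ?_)
  · exact (prod_le_prod (fun _ _ => by positivity) fun k _ => by grw [hwc k]).trans (hB N)
  · exact (sum_le_sum fun k _ => hwc k).trans (hT N)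
  · exact sum_nonneg fun _ _ => norm_nonneg _
  · exact (prod_nonneg fun k _ => by grw [← hwc k]; positivity).trans (hB N)

end InfiniteProduct

theorem tendsto_prod_range_one_add_sq_div_sq {s : ℝ} (hs : s ≠ 0) :
    Tendsto (fun n : ℕ => ∏ j ∈ range n, (1 + s ^ 2 / ((j : ℝ) + 1) ^ 2)) atTop
      (𝓝 (Real.sinh (π * s) / (π * s))) := by
  have hπs : (π * (s * I) : ℂ) ≠ 0 := by simp [hs, Real.pi_ne_zero]
  rw [← tendsto_ofReal_iff]
  convert (Complex.tendsto_euler_sin_prod (s * I)).div_const (π * (s * I)) using 1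
  · ext n
    push_cast
    rw [mul_div_cancel_left₀ _ hπs]
    refine prod_congr rfl fun j _ => ?_
    rw [mul_pow, I_sq]
    ring
  · rw [← mul_assoc, sin_mul_I]
    push_cast
    field_simp

/-- Split `∏_{j < 2m}` into even and odd `j`: `(2r)² / (2k + 1)² = r² / (k + 1/2)²`. -/
theorem prod_range_one_add_sq_div_add_half_sq_mul (r : ℝ) (m : ℕ) :
    (∏ k ∈ range m, (1 + r ^ 2 / ((k : ℝ) + 1 / 2) ^ 2)) *
        ∏ k ∈ range m, (1 + r ^ 2 / ((k : ℝ) + 1) ^ 2) =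
      ∏ j ∈ range (2 * m), (1 + (2 * r) ^ 2 / ((j : ℝ) + 1) ^ 2) := by
  induction m with
  | zero => simp
  | succ m ih =>
    rw [mul_add_one, prod_range_succ, prod_range_succ, prod_range_succ, prod_range_succ, ← ih]
    have h₁ : (2 * r) ^ 2 / ((2 * m : ℕ) + 1 : ℝ) ^ 2 = r ^ 2 / ((m : ℝ) + 1 / 2) ^ 2 := by
      push_cast; field_simp
    have h₂ : (2 * r) ^ 2 / ((2 * m + 1 : ℕ) + 1 : ℝ) ^ 2 = r ^ 2 / ((m : ℝ) + 1) ^ 2 := by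
      push_cast; field_simp; ring
    rw [h₁, h₂]
    ring

theorem tendsto_prod_range_one_add_sq_div_add_half_sq {r : ℝ} (hr : r ≠ 0) :
    Tendsto (fun m : ℕ => ∏ k ∈ range m, (1 + r ^ 2 / ((k : ℝ) + 1 / 2) ^ 2)) atTop
      (𝓝 (Real.cosh (π * r))) := by
  have hsinh : Real.sinh (π * r) ≠ 0 := by simpa using mul_ne_zero Real.pi_ne_zero hr
  have hπr : π * r ≠ 0 := mul_ne_zero Real.pi_ne_zero hr
  have hlim := ((tendsto_prod_range_one_add_sq_div_sq (mul_ne_zero two_ne_zero hr)).comp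
    (tendsto_id.const_mul_atTop' two_pos)).div (tendsto_prod_range_one_add_sq_div_sq hr)
    (div_ne_zero hsinh hπr)
  convert hlim using 2 with m
  · simp only [Pi.div_apply, Function.comp_apply, id]
    rw [← prod_range_one_add_sq_div_add_half_sq_mul,
      mul_div_cancel_right₀ _ (prod_pos fun k _ => by positivity).ne']
  · rw [mul_left_comm, Real.sinh_two_mul]
    field_simp

theorem prod_range_one_add_sq_div_add_half_sq_le_cosh (r : ℝ) (N : ℕ) :
    ∏ k ∈ range N, (1 + r ^ 2 / ((k : ℝ) + 1 / 2) ^ 2) ≤ Real.cosh (π * r) := by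
  rcases eq_or_ne r 0 with rfl | hr
  · simp
  refine Monotone.ge_of_tendsto (monotone_nat_of_le_succ fun m => ?_)
    (tendsto_prod_range_one_add_sq_div_add_half_sq hr) N
  rw [prod_range_succ]
  exact le_mul_of_one_le_right (prod_nonneg fun k _ => by positivity) (by simp; positivity)

theorem summable_inv_add_half_sq : Summable fun k : ℕ => (((k : ℝ) + 1 / 2) ^ 2)⁻¹ :=
  ((Real.summable_one_div_nat_add_rpow (1 / 2) 2).mpr one_lt_two).congr fun k => by
    rw [abs_of_pos (by positivity), Real.rpow_two, one_div]

theorem sum_Ico_inv_add_half_sq_le {n : ℕ} (hn : n ≠ 0) (N : ℕ) :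
    ∑ k ∈ Ico n N, (((k : ℝ) + 1 / 2) ^ 2)⁻¹ ≤ 2 / (n : ℝ) := by
  obtain ⟨n, rfl⟩ := Nat.exists_eq_add_one_of_ne_zero hn
  calc ∑ k ∈ Ico (n + 1) N, (((k : ℝ) + 1 / 2) ^ 2)⁻¹
      ≤ ∑ k ∈ Ioo n N, ((k : ℝ) ^ 2)⁻¹ := by
        rw [Ico_add_one_left_eq_Ioo]
        gcongr with k hk
        · exact pow_pos (Nat.cast_pos.mpr (Nat.zero_lt_of_lt (mem_Ioo.mp hk).1)) 2
        · linarith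
    _ ≤ 2 / (n + 1 : ℕ) := by exact_mod_cast sum_Ioo_inv_sq_le n N

theorem partial_product_uniform_approx :
    ∃ C : ℝ, 0 < C ∧
      ∀ (x : ℕ → ℝ),
        (∀ k : ℕ, 1 ≤ k → ((k : ℝ) - 1 / 2) * Real.pi < x k ∧ x k < (k : ℝ) * Real.pi) →
        ∀ (r : ℝ), 0 < r → ∀ (p : ℕ), 0 < p → ∀ z : ℂ, ‖z‖ < Real.pi * r →
          ‖
              ((∏ k ∈ Finset.range (2 * p), (1 - z ^ 2 / ((x (k + 1) : ℂ)) ^ 2)) -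
                ∏' k : ℕ, (1 - z ^ 2 / ((x (k + 1) : ℂ)) ^ 2))‖ ≤
            r ^ 2 * Real.cosh (Real.pi * r) / p * C := by
  refine ⟨1, one_pos, fun x hx r hr p hp z hz => ?_⟩
  have hwc (k : ℕ) : ‖-(z ^ 2 / (x (k + 1) : ℂ) ^ 2)‖ ≤ r ^ 2 / ((k : ℝ) + 1 / 2) ^ 2 := by
    have hxk : ((k : ℝ) + 1 / 2) * π < x (k + 1) := by
      convert (hx (k + 1) k.succ_pos).1 using 2
      push_cast; ring
    rw [norm_neg, norm_div, norm_pow, norm_pow, norm_real, Real.norm_eq_abs, sq_abs]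
    calc ‖z‖ ^ 2 / x (k + 1) ^ 2 ≤ (π * r) ^ 2 / (((k : ℝ) + 1 / 2) * π) ^ 2 := by
          gcongr
      _ = r ^ 2 / ((k : ℝ) + 1 / 2) ^ 2 := by field_simp
  have hT (N : ℕ) : ∑ k ∈ Ico (2 * p) N, r ^ 2 / ((k : ℝ) + 1 / 2) ^ 2 ≤ r ^ 2 / p := by
    simp_rw [div_eq_mul_inv (r ^ 2), ← mul_sum]
    grw [sum_Ico_inv_add_half_sq_le (by positivity) N]
    push_cast
    rw [div_mul_cancel_left₀ two_ne_zero]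
  have hdiff := norm_tprod_one_add_sub_prod_range_le hwc
    (by simpa only [div_eq_mul_inv] using summable_inv_add_half_sq.mul_left (r ^ 2))
    (prod_range_one_add_sq_div_add_half_sq_le_cosh r) (2 * p) hT
  simp_rw [sub_eq_add_neg (1 : ℂ)]
  rw [norm_sub_rev]
  exact hdiff.trans_eq (by ring)
end
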